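/- arXiv:2502.08196 — 2 statements merged into one kernel-verified Lean document; each statement's English description precedes it below -/
import Mathlib

section
/- A ring R is weak symmetric if and only if for all a, b, c in R, abc nilpotent implies bac nilpotent. -/
/-! Since `(y * x) ^ (n + 1) = y * (x * y) ^ n * x`, the products `x * y` and `y * x` are
nilpotent together. Hence `a * c * b = (a * c) * b` is nilpotent iff `b * a * c = b * (a * c)` is,
and the two conditions agree for each triple `a, b, c`. -/

theorem IsNilpotent.mul_swap {M : Type*} [MonoidWithZero M] {x y : M}
    (h : IsNilpotent (x * y)) : IsNilpotent (y * x) := by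
  obtain ⟨n, hn⟩ := h
  refine ⟨n + 1, ?_⟩
  rw [_root_.pow_succ, ← mul_assoc, mul_pow_mul, hn, mul_zero, zero_mul]

theorem isNilpotent_mul_comm {M : Type*} [MonoidWithZero M] {x y : M} :
    IsNilpotent (x * y) ↔ IsNilpotent (y * x) :=
  ⟨IsNilpotent.mul_swap, IsNilpotent.mul_swap⟩

theorem stmt_8 (R : Type*) [Ring R] :
    (∀ a b c : R, IsNilpotent (a * b * c) → IsNilpotent (a * c * b)) ↔
      (∀ a b c : R, IsNilpotent (a * b * c) → IsNilpotent (b * a * c)) := by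
  refine forall₃_congr fun a b c => imp_congr_right fun _ => ?_
  rw [mul_assoc b]
  exact isNilpotent_mul_comm
end

section
/- Let I be a nil two-sided ideal of a ring R. If R/I is NJ-symmetric, then R is NJ-symmetric. -/
/-!
An element `x` with `f x ∈ J(S)` lies in `comap f J(S) = J(ker f)`, and a nil left ideal lies in
`J(R)` (if `y * x` is nilpotent then `y * x + 1` is a unit), so `J(ker f) = J(R)`. Hence
`J(S)` pulls back into `J(R)`, and the NJ-symmetry of `S` transfers along `f`, since `f` preserves
nilpotency.
-/

/-- A ring `R` is NJ-symmetric if for all `a b c`, `a*b*c` nilpotent implies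
`b*a*c` lies in the Jacobson radical. -/
def NJSymmetric (R : Type*) [Ring R] : Prop :=
  ∀ a b c : R, IsNilpotent (a * b * c) → b * a * c ∈ (⊥ : Ideal R).jacobson

namespace Ideal

variable {R S : Type*} [Ring R] [Ring S]

theorem le_jacobson_bot_of_forall_isNilpotent {J : Ideal R} (hJ : ∀ x ∈ J, IsNilpotent x) :
    J ≤ (⊥ : Ideal R).jacobson := by
  intro x hx
  rw [mem_jacobson_iff]
  intro y
  obtain ⟨u, hu⟩ := (hJ _ (J.mul_mem_left y hx)).isUnit_add_one
  refine ⟨↑u⁻¹, ?_⟩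
  rw [mem_bot, sub_eq_zero, mul_assoc, ← mul_add_one, ← hu, Units.inv_mul]

theorem comap_jacobson_bot_le_of_surjective {f : R →+* S} (hf : Function.Surjective f)
    (hker : ∀ x ∈ RingHom.ker f, IsNilpotent x) :
    (⊥ : Ideal S).jacobson.comap f ≤ (⊥ : Ideal R).jacobson := by
  rw [comap_jacobson_of_surjective hf, ← RingHom.ker_eq_comap_bot]
  calc (RingHom.ker f).jacobson ≤ (⊥ : Ideal R).jacobson.jacobson :=
        jacobson_mono (le_jacobson_bot_of_forall_isNilpotent hker)
    _ = (⊥ : Ideal R).jacobson := jacobson_idem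

end Ideal

theorem NJSymmetric.of_surjective {R S : Type*} [Ring R] [Ring S] {f : R →+* S}
    (hf : Function.Surjective f) (hker : ∀ x ∈ RingHom.ker f, IsNilpotent x)
    (hS : NJSymmetric S) : NJSymmetric R := by
  intro a b c habc
  apply Ideal.comap_jacobson_bot_le_of_surjective hf hker
  rw [Ideal.mem_comap, map_mul, map_mul]
  exact hS _ _ _ (by simpa only [map_mul] using habc.map f)

theorem stmt_17 (R : Type*) [Ring R] (I : TwoSidedIdeal R)
    (hnil : ∀ x ∈ I, IsNilpotent x)
    (S : Type*) [Ring S] (f : R →+* S) (hf : Function.Surjective f)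
    (hker : ∀ x : R, f x = 0 ↔ x ∈ I)
    (hS : NJSymmetric S) :
    NJSymmetric R :=
  hS.of_surjective hf fun x hx => hnil x ((hker x).1 hx)
end
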